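/- For every n ≥ 1, the bivariate cyclic Eulerian polynomial satisfies A_n^{(c)}(x,y) = n · A_{n-1}(x,y), where A_n^{(c)}(x,y) = Σ_{π ∈ S_n} x^{cdes(π)} y^{casc(π)} and A_{n-1}(x,y) = Σ_{π ∈ S_{n-1}} x^{des(π)} y^{asc(π)}. -/

import Mathlib

open scoped Classical
open Finset MvPolynomial

/-- The word `w` padded with a `0` at the front and at the end; `pad w i` is the
`i`-th letter of `0, w_1, …, w_M, 0` (so `pad w 0 = 0 = pad w (M+1)`). -/
def pad (w : List ℕ) : ℕ → ℕ := fun i => (0 :: (w ++ [0])).getD i 0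

/-- number of descents (indices `0 ≤ i ≤ M` with `π_i > π_{i+1}`, convention `π_0 = π_{M+1} = 0`). -/
def desN (w : List ℕ) : ℕ :=
  ((Finset.range (w.length + 1)).filter fun i => pad w (i + 1) < pad w i).card

/-- number of ascents. -/
def ascN (w : List ℕ) : ℕ :=
  ((Finset.range (w.length + 1)).filter fun i => pad w i < pad w (i + 1)).card

/-- number of plateaus. -/
def platN (w : List ℕ) : ℕ :=
  ((Finset.range (w.length + 1)).filter fun i => pad w i = pad w (i + 1)).card

/-- number of double descents: indices `1 ≤ i ≤ M` with `π_{i-1} > π_i > π_{i+1}`. -/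
def ddN (w : List ℕ) : ℕ :=
  ((Finset.range w.length).filter fun i =>
    pad w (i + 1) < pad w i ∧ pad w (i + 2) < pad w (i + 1)).card

/-- number of cyclic descents: indices `1 ≤ i ≤ M` with `π_i > π_{i+1}`, cyclic convention
`π_{M+1} = π_1`. -/
def cdesN (w : List ℕ) : ℕ :=
  ((Finset.range w.length).filter fun i =>
    w.getD ((i + 1) % w.length) 0 < w.getD i 0).card

/-- number of cyclic ascents. -/
def cascN (w : List ℕ) : ℕ :=
  ((Finset.range w.length).filter fun i =>
    w.getD i 0 < w.getD ((i + 1) % w.length) 0).card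

/-- The permutations of `[n] = {1,…,n}`, as words (lists). -/
def Sn (n : ℕ) : Finset (List ℕ) := (List.range' 1 n).permutations.toFinset

/-- quasi-Stirling: no four positions `i<j<k<l` with `w_i = w_k`, `w_j = w_l`, `w_i ≠ w_j`
(no subword order-isomorphic to 1212 or 2121). -/
def IsQS (w : List ℕ) : Prop :=
  ¬ ∃ i j k l, i < j ∧ j < k ∧ k < l ∧ l < w.length ∧
      w.getD i 0 = w.getD k 0 ∧ w.getD j 0 = w.getD l 0 ∧ w.getD i 0 ≠ w.getD j 0

/-- The multiset `{1^{m 1}, …, n^{m n}}`, written as a (weakly increasing) list. -/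
def msetList (n : ℕ) (m : ℕ → ℕ) : List ℕ :=
  (List.range n).flatMap fun i => List.replicate (m (i + 1)) (i + 1)

/-- The finite set of quasi-Stirling multipermutations of `{1^{m 1}, …, n^{m n}}`. -/
noncomputable def QS (n : ℕ) (m : ℕ → ℕ) : Finset (List ℕ) :=
  (msetList n m).permutations.toFinset.filter IsQS

/-- `p` is a position of `w` holding a non-leftmost copy of its value. -/
def nonFirstPos (w : List ℕ) (p : ℕ) : Prop :=
  p < w.length ∧ ∃ q, q < p ∧ w.getD q 0 = w.getD p 0

/-- Rooted quasi-Stirling multipermutations: pairs `(π, r)` where `π` is quasi-Stirling and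
either `r = none` (rooted at `0`) or `r = some p` with `p` a position of a non-first copy. -/
noncomputable def RootedQS (n : ℕ) (m : ℕ → ℕ) : Finset (List ℕ × Option ℕ) :=
  ((QS n m) ×ˢ insert none ((Finset.range (msetList n m).length).image some)).filter
    fun P => ∀ r, P.2 = some r → nonFirstPos P.1 r

/-- Sum of the block sizes of the blocks preceding block `i`. -/
def offsetC {k : ℕ} (c : Fin k → ℕ) (i : Fin k) : ℕ :=
  ∑ j ∈ Finset.univ.filter (fun j : Fin k => (j : ℕ) < (i : ℕ)), c j

/-- The `i`-th block of the ordered set partition encoded by the word `w` together with the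
composition `c` of block sizes. -/
def blockOf (k : ℕ) (w : List ℕ) (c : Fin k → ℕ) (i : Fin k) : List ℕ :=
  (w.drop (offsetC c i)).take (c i)

/-- `B_{n,k}`: ordered set partitions of `[n]` into `k` possibly empty blocks, each block
written as a permutation of its elements; encoded as a pair `(w, c)` of a permutation word
`w` of `[n]` and a composition `c` of `n` into `k` nonnegative parts (the block sizes). -/
def Bnk (n k : ℕ) : Finset (List ℕ × (Fin k → ℕ)) :=
  Sn n ×ˢ Finset.Nat.antidiagonalTuple k n

/-- blockwise descent number of an ordered set partition. -/
def desB {k : ℕ} (P : List ℕ × (Fin k → ℕ)) : ℕ := ∑ i, desN (blockOf k P.1 P.2 i)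

/-- blockwise ascent number of an ordered set partition. -/
def ascB {k : ℕ} (P : List ℕ × (Fin k → ℕ)) : ℕ := ∑ i, ascN (blockOf k P.1 P.2 i)

/-- number of empty blocks of an ordered set partition. -/
def empB {k : ℕ} (P : List ℕ × (Fin k → ℕ)) : ℕ :=
  (Finset.univ.filter fun i => P.2 i = 0).card

/-- `A(x,y,u) = Σ_{n ≥ 0} A_n(x,y) uⁿ/n!`, power series in `u` with coefficients in
`ℚ[x,y,z] = MvPolynomial (Fin 3) ℚ` (`x = X 0`, `y = X 1`, `z = X 2`). -/
noncomputable def AEGF3 : PowerSeries (MvPolynomial (Fin 3) ℚ) :=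
  PowerSeries.mk fun j => (j.factorial : ℚ)⁻¹ •
    ∑ w ∈ Sn j, (X 0 : MvPolynomial (Fin 3) ℚ) ^ desN w * (X 1) ^ ascN w

/-- The global index of the `j`-th gap of block `i` (each block `i` has `c i + 1` gaps). -/
def gapIdx {k : ℕ} (c : Fin k → ℕ) (i : Fin k) (j : ℕ) : ℕ :=
  (∑ j' ∈ Finset.univ.filter (fun j' : Fin k => (j' : ℕ) < (i : ℕ)), (c j' + 1)) + j

/-- A bar placement `b` (bars per gap, `n + k` gaps in total) is good for the ordered set
partition `(w, c) ∈ B_{n,k}` if every descent gap of every block receives at least one bar. -/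
def GoodBars (n k : ℕ) (w : List ℕ) (c : Fin k → ℕ) (b : Fin (n + k) → ℕ) : Prop :=
  ∀ i : Fin k, ∀ j ≤ c i,
    pad (blockOf k w c i) (j + 1) < pad (blockOf k w c i) j →
      ∀ g : Fin (n + k), (g : ℕ) = gapIdx c i j → 1 ≤ b g

/-- `π_i` (1-indexed, `pad w i`) is the last copy of its value in `w`. -/
def lastCopy (w : List ℕ) (i : ℕ) : Prop :=
  ∀ j, i < j → j ≤ w.length → pad w j ≠ pad w i

/-- `π_p` is the first copy of its value; by convention the boundary entry `π_{M+1} = 0`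
is regarded as a second (non-first) copy of `0`. -/
def firstCopy (w : List ℕ) (p : ℕ) : Prop :=
  p ≤ w.length ∧ ∀ j, 1 ≤ j → j < p → pad w j ≠ pad w p

/-- sibling descent of type I at `i`: `π_{i+1}` is a first copy and `π_i > π_{i+1}`. -/
def TypeI (w : List ℕ) (i : ℕ) : Prop :=
  firstCopy w (i + 1) ∧ pad w (i + 1) < pad w i

/-- `i` is a sibling descent: `π_i` is a last copy, and either type I holds at `i` or
`π_{i+1}` is a non-first copy (type II). -/
def SDes (w : List ℕ) (i : ℕ) : Prop :=
  lastCopy w i ∧ (TypeI w i ∨ ¬ firstCopy w (i + 1))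

/-- number of sibling descents (indices `1 ≤ i ≤ M`). -/
noncomputable def sdN (w : List ℕ) : ℕ :=
  ((Finset.Icc 1 w.length).filter (SDes w)).card

/-- number of double sibling descents: indices `2 ≤ i ≤ M` such that both `i-1` and `i`
are sibling descents and `i-1` is of type I. -/
noncomputable def dsdN (w : List ℕ) : ℕ :=
  ((Finset.Icc 2 w.length).filter fun i =>
    SDes w (i - 1) ∧ SDes w i ∧ TypeI w (i - 1)).card

/-!
Cyclic descents and ascents are invariant under rotation, and every `π ∈ S_n` is, in exactly one
way, a rotation `(w ++ [n]).rotate k` with `w ∈ S_{n-1}` and `k < n`. Read cyclically, `w ++ [n]`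
is the word `n, w_1, …, w_{n-1}, n`, whose comparisons agree with those of the padded word
`0, w_1, …, w_{n-1}, 0` except at the two ends; there both paddings contribute one descent and one
ascent, so `cdes (w ++ [n]) = des w` and `casc (w ++ [n]) = asc w`.
-/

theorem card_filter_range_add_of_periodic {p : ℕ → Prop} [DecidablePred p] {L : ℕ}
    (hp : Function.Periodic p L) (k : ℕ) :
    #{i ∈ range L | p (i + k)} = #{i ∈ range L | p i} := by
  have hshift : (range L).map (addRightEmbedding k) = Ico k (k + L) := by
    rw [range_eq_Ico, map_add_right_Ico, zero_add, add_comm]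
  rw [← Nat.count_eq_card_filter_range p L, ← Nat.filter_Ico_card_eq_of_periodic k L p hp, ← hshift,
    filter_map, card_map]
  rfl

theorem getD_rotate_mod {α : Type*} (l : List α) (d : α) (k i : ℕ) (hl : 0 < l.length) :
    (l.rotate k).getD (i % l.length) d = l.getD ((i + k) % l.length) d := by
  rw [List.getD_eq_getElem _ _ (by simpa using Nat.mod_lt i hl), List.getElem_rotate,
    List.getD_eq_getElem _ _ (Nat.mod_lt _ hl)]
  simp only [Nat.mod_add_mod]

theorem card_filter_cyclic_rotate {α : Type*} (R : α → α → Prop) [DecidableRel R] (d : α)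
    (l : List α) (k : ℕ) :
    #{i ∈ range (l.rotate k).length |
        R ((l.rotate k).getD i d) ((l.rotate k).getD ((i + 1) % (l.rotate k).length) d)} =
      #{i ∈ range l.length | R (l.getD i d) (l.getD ((i + 1) % l.length) d)} := by
  rcases l.length.eq_zero_or_pos with hl | hl
  · simp [hl]
  set p : ℕ → Prop := fun i => R (l.getD (i % l.length) d) (l.getD ((i + 1) % l.length) d)
  have hp : Function.Periodic p l.length := fun i => by
    simp only [p, Nat.add_mod_right, add_right_comm i l.length 1]
  rw [List.length_rotate]
  calc _ = #{i ∈ range l.length | p (i + k)} := by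
        congr 1
        refine filter_congr fun i hi => ?_
        have hi' := Nat.mod_eq_of_lt (mem_range.1 hi)
        rw [← hi', getD_rotate_mod _ _ _ _ hl, getD_rotate_mod _ _ _ _ hl, hi', add_right_comm]
    _ = #{i ∈ range l.length | p i} := card_filter_range_add_of_periodic hp k
    _ = _ := by
        congr 1
        exact filter_congr fun i hi => by simp only [p, Nat.mod_eq_of_lt (mem_range.1 hi)]

theorem cdesN_rotate (l : List ℕ) (k : ℕ) : cdesN (l.rotate k) = cdesN l :=
  card_filter_cyclic_rotate (fun a b => b < a) 0 l k

theorem cascN_rotate (l : List ℕ) (k : ℕ) : cascN (l.rotate k) = cascN l :=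
  card_filter_cyclic_rotate (· < ·) 0 l k

def padWith (a : ℕ) (w : List ℕ) (i : ℕ) : ℕ := (a :: (w ++ [a])).getD i 0

theorem padWith_zero (a : ℕ) (w : List ℕ) : padWith a w 0 = a := rfl

theorem padWith_succ_of_lt (a : ℕ) {w : List ℕ} {i : ℕ} (h : i < w.length) :
    padWith a w (i + 1) = w.getD i 0 :=
  List.getD_append _ _ _ _ h

theorem padWith_length_succ (a : ℕ) (w : List ℕ) : padWith a w (w.length + 1) = a := by
  simp [padWith]

theorem padWith_eq_padWith (a b : ℕ) {w : List ℕ} {i : ℕ} (h₁ : 1 ≤ i) (h₂ : i ≤ w.length) :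
    padWith a w i = padWith b w i := by
  obtain ⟨j, rfl⟩ := Nat.exists_eq_add_of_le' h₁
  rw [padWith_succ_of_lt a (by omega), padWith_succ_of_lt b (by omega)]

theorem getD_cons_eq_padWith (a : ℕ) {w : List ℕ} {i : ℕ} (h : i ≤ w.length) :
    (a :: w).getD i 0 = padWith a w i := by
  rw [padWith, ← List.cons_append, List.getD_append _ _ _ _ (by simpa [Nat.lt_succ_iff])]

theorem card_filter_cyclic_cons (R : ℕ → ℕ → Prop) [DecidableRel R] (a : ℕ) (w : List ℕ) :
    #{i ∈ range (a :: w).length |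
        R ((a :: w).getD i 0) ((a :: w).getD ((i + 1) % (a :: w).length) 0)} =
      #{i ∈ range (w.length + 1) | R (padWith a w i) (padWith a w (i + 1))} := by
  congr 1
  refine filter_congr fun i hi => ?_
  have hi : i ≤ w.length := Nat.lt_succ_iff.1 (mem_range.1 hi)
  have hnext : (a :: w).getD ((i + 1) % (w.length + 1)) 0 = padWith a w (i + 1) := by
    rcases hi.lt_or_eq with hlt | rfl
    · rw [Nat.mod_eq_of_lt (by omega), getD_cons_eq_padWith a hlt]
    · rw [Nat.mod_self, padWith_length_succ]; rfl
  rw [List.length_cons, hnext, getD_cons_eq_padWith a hi]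

theorem card_filter_range_add_boundary_eq (R : ℕ → ℕ → Prop) [DecidableRel R] {s t : ℕ → ℕ}
    {m : ℕ} (hst : ∀ i, 1 ≤ i → i ≤ m + 1 → s i = t i) :
    #{i ∈ range (m + 1 + 1) | R (s i) (s (i + 1))} +
        ((if R (t 0) (t 1) then 1 else 0) + if R (t (m + 1)) (t (m + 1 + 1)) then 1 else 0) =
      #{i ∈ range (m + 1 + 1) | R (t i) (t (i + 1))} +
        ((if R (s 0) (s 1) then 1 else 0) + if R (s (m + 1)) (s (m + 1 + 1)) then 1 else 0) := by
  have hinner : ∑ i ∈ range m, (if R (s (i + 1)) (s (i + 1 + 1)) then 1 else 0) =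
      ∑ i ∈ range m, (if R (t (i + 1)) (t (i + 1 + 1)) then 1 else 0) :=
    sum_congr rfl fun i hi => by
      have := mem_range.1 hi
      rw [hst (i + 1) (by omega) (by omega), hst (i + 1 + 1) (by omega) (by omega)]
  simp only [card_filter, sum_range_succ _ (m + 1), sum_range_succ' _ m, hinner]
  ring

/-- Rotating `w ++ [a]` to `a :: w` turns its cyclic reading into `padWith a w`, which differs
from `pad w` only in the first and last comparisons. -/
theorem card_filter_cyclic_append_singleton_add (R : ℕ → ℕ → Prop) [DecidableRel R]
    (a x : ℕ) (t : List ℕ) :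
    #{i ∈ range (x :: t ++ [a]).length | R ((x :: t ++ [a]).getD i 0)
        ((x :: t ++ [a]).getD ((i + 1) % (x :: t ++ [a]).length) 0)} +
      ((if R 0 x then 1 else 0) + if R ((x :: t).getD t.length 0) 0 then 1 else 0) =
    #{i ∈ range ((x :: t).length + 1) | R (pad (x :: t) i) (pad (x :: t) (i + 1))} +
      ((if R a x then 1 else 0) + if R ((x :: t).getD t.length 0) a then 1 else 0) := by
  rw [← card_filter_cyclic_rotate R 0 _ (x :: t).length, List.rotate_append_length_eq,
    List.singleton_append, card_filter_cyclic_cons]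
  have hbd := card_filter_range_add_boundary_eq R (m := t.length)
    (s := padWith a (x :: t)) (t := padWith 0 (x :: t))
    fun i h₁ h₂ => padWith_eq_padWith a 0 h₁ (by simpa using h₂)
  have hfirst (b : ℕ) : padWith b (x :: t) 1 = x := rfl
  have hlast (b : ℕ) : padWith b (x :: t) (t.length + 1) = (x :: t).getD t.length 0 :=
    padWith_succ_of_lt b (by simp)
  have hend (b : ℕ) : padWith b (x :: t) (t.length + 1 + 1) = b := padWith_length_succ b (x :: t)
  rwa [padWith_zero, padWith_zero, hfirst, hfirst, hlast, hlast, hend, hend] at hbd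

theorem cdesN_append_of_lt {n : ℕ} {w : List ℕ} (hw : ∀ x ∈ w, 0 < x ∧ x < n) :
    cdesN (w ++ [n]) = desN w := by
  rcases w with _ | ⟨x, t⟩
  · simp [cdesN, desN, pad, filter_singleton]
  have hbd := card_filter_cyclic_append_singleton_add (fun x y => y < x) n x t
  have hfirst := hw x List.mem_cons_self
  have hlast := hw _ (List.getElem_mem (l := x :: t) (n := t.length) (by simp))
  rw [List.getD_eq_getElem _ _ (by simp)] at hbd
  simp only [Nat.not_lt_zero, hfirst.2, hlast.1, not_lt.2 hlast.2.le, if_true, if_false] at hbd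
  rw [cdesN, desN]
  omega

theorem cascN_append_of_lt {n : ℕ} {w : List ℕ} (hw : ∀ x ∈ w, 0 < x ∧ x < n) :
    cascN (w ++ [n]) = ascN w := by
  rcases w with _ | ⟨x, t⟩
  · simp [cascN, ascN, pad, filter_singleton]
  have hbd := card_filter_cyclic_append_singleton_add (· < ·) n x t
  have hfirst := hw x List.mem_cons_self
  have hlast := hw _ (List.getElem_mem (l := x :: t) (n := t.length) (by simp))
  rw [List.getD_eq_getElem _ _ (by simp)] at hbd
  simp only [Nat.not_lt_zero, hfirst.1, hlast.2, not_lt.2 hfirst.2.le, if_true, if_false] at hbd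
  rw [cascN, ascN]
  omega

theorem mem_Sn {n : ℕ} {w : List ℕ} : w ∈ Sn n ↔ w.Perm (List.range' 1 n) := by
  simp [Sn, List.mem_permutations]

theorem pos_lt_of_mem_Sn {n : ℕ} {w : List ℕ} (hw : w ∈ Sn n) : ∀ x ∈ w, 0 < x ∧ x < n + 1 := by
  intro x hx
  have := List.mem_range'_1.1 ((mem_Sn.1 hw).subset hx)
  omega

theorem length_of_mem_Sn {n : ℕ} {w : List ℕ} (hw : w ∈ Sn n) : w.length = n := by
  rw [(mem_Sn.1 hw).length_eq, List.length_range']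

theorem append_cons_mem_Sn_succ_iff {m : ℕ} {a b : List ℕ} :
    a ++ (m + 1) :: b ∈ Sn (m + 1) ↔ b ++ a ∈ Sn m := by
  have hperm : (a ++ (m + 1) :: b).Perm (b ++ a ++ [m + 1]) :=
    List.perm_middle.trans <| ((List.perm_append_comm).cons _).trans
      (List.perm_append_singleton _ _).symm
  rw [mem_Sn, mem_Sn, hperm.congr_left, List.range'_1_concat, add_comm 1 m,
    List.perm_append_right_iff]

theorem rotate_append_singleton {α : Type*} (w : List α) (a : α) {k : ℕ} (hk : k ≤ w.length) :
    (w ++ [a]).rotate k = w.drop k ++ a :: w.take k := by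
  rw [List.rotate_eq_drop_append_take (by simp; omega), List.drop_append_of_le_length hk,
    List.take_append_of_le_length hk, List.append_assoc, List.singleton_append]

theorem rotate_append_singleton_inj {α : Type*} {a : α} {w w' : List α} {k k' : ℕ}
    (ha : a ∉ w) (hk : k ≤ w.length) (hk' : k' ≤ w'.length) (hlen : w.length = w'.length)
    (h : (w ++ [a]).rotate k = (w' ++ [a]).rotate k') : k = k' ∧ w = w' := by
  rw [rotate_append_singleton w a hk, rotate_append_singleton w' a hk'] at h
  obtain ⟨hdrop, -, htake⟩ := (List.append_cons_inj_of_notMem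
    (fun h => ha (List.mem_of_mem_drop h)) (fun h => ha (List.mem_of_mem_take h))).1 h
  have hkk' : k = k' := by
    have := congrArg List.length htake
    simp only [List.length_take] at this
    omega
  subst hkk'
  exact ⟨rfl, by rw [← List.take_append_drop k w, ← List.take_append_drop k w', hdrop, htake]⟩

theorem sum_Sn_succ {M : Type*} [AddCommMonoid M] (m : ℕ) (f : List ℕ → M) :
    ∑ π ∈ Sn (m + 1), f π = ∑ p ∈ range (m + 1) ×ˢ Sn m, f ((p.2 ++ [m + 1]).rotate p.1) := by
  symm
  refine sum_nbij (fun p => (p.2 ++ [m + 1]).rotate p.1) ?_ ?_ ?_ fun _ _ => rfl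
  · rintro ⟨k, w⟩ h
    obtain ⟨hk, hw⟩ := mem_product.1 h
    have hk : k ≤ w.length := by rw [length_of_mem_Sn hw]; exact Nat.lt_succ_iff.1 (mem_range.1 hk)
    rw [rotate_append_singleton w _ hk, append_cons_mem_Sn_succ_iff, List.take_append_drop]
    exact hw
  · rintro ⟨k, w⟩ h ⟨k', w'⟩ h' heq
    obtain ⟨hk, hw⟩ := mem_product.1 h
    obtain ⟨hk', hw'⟩ := mem_product.1 h'
    have hlen := length_of_mem_Sn hw
    have hlen' := length_of_mem_Sn hw'
    obtain ⟨rfl, rfl⟩ := rotate_append_singleton_inj (fun h => (pos_lt_of_mem_Sn hw _ h).2.false)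
      (by rw [hlen]; exact Nat.lt_succ_iff.1 (mem_range.1 hk))
      (by rw [hlen']; exact Nat.lt_succ_iff.1 (mem_range.1 hk')) (hlen.trans hlen'.symm) heq
    rfl
  · intro π hπ
    have hmem : m + 1 ∈ π := (mem_Sn.1 hπ).mem_iff.2 (List.mem_range'_1.2 (by omega))
    obtain ⟨a, b, rfl⟩ := List.append_of_mem hmem
    have hba : b ++ a ∈ Sn m := append_cons_mem_Sn_succ_iff.1 hπ
    have hlen := length_of_mem_Sn hba
    refine ⟨(b.length, b ++ a), mem_product.2 ⟨mem_range.2 (by simp at hlen; omega), hba⟩, ?_⟩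
    simp

/-- `A_n^{(c)}(x,y) = n · A_{n-1}(x,y)`. -/
theorem stmt1 (n : ℕ) (hn : 1 ≤ n) :
    (∑ w ∈ Sn n, (X 0 : MvPolynomial (Fin 2) ℚ) ^ cdesN w * (X 1) ^ cascN w) =
      n • ∑ w ∈ Sn (n - 1), (X 0 : MvPolynomial (Fin 2) ℚ) ^ desN w * (X 1) ^ ascN w := by
  obtain ⟨m, rfl⟩ := Nat.exists_eq_add_of_le' hn
  have hterm (k : ℕ) (w : List ℕ) (hw : w ∈ Sn m) :
      (X 0 : MvPolynomial (Fin 2) ℚ) ^ cdesN ((w ++ [m + 1]).rotate k) *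
          X 1 ^ cascN ((w ++ [m + 1]).rotate k) = X 0 ^ desN w * X 1 ^ ascN w := by
    rw [cdesN_rotate, cascN_rotate, cdesN_append_of_lt (pos_lt_of_mem_Sn hw),
      cascN_append_of_lt (pos_lt_of_mem_Sn hw)]
  rw [sum_Sn_succ, sum_product, Nat.add_sub_cancel,
    sum_congr rfl fun k _ => sum_congr rfl (hterm k), sum_const, card_range]
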